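/- Let u = (u(x)|u'(x)) and v = (v(x)|v'(x)) be elements of Z_2[x]/(x^α-1) × Z_4[x]/(x^β-1) such that u(x)∘v(x) = 0 in Z_4[x]/(x^m-1) where m = lcm(α,β). If u'(x) = 0 or v'(x) = 0, then u(x)v*(x) ≡ 0 (mod x^α - 1) over Z_2. -/

import Mathlib

open Polynomial

/-- Coefficientwise lift of a binary polynomial to `Z₄[x]`, with
coefficients in `{0,1} ⊆ Z₄`. -/
noncomputable def lift24 (p : Polynomial (ZMod 2)) : Polynomial (ZMod 4) :=
  ∑ i ∈ p.support, C (((p.coeff i).val : ℕ) : ZMod 4) * X ^ i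

/-- `θ_k(x^n) = ∑_{i=0}^{k-1} x^{ni}` in `Z₄[x]`. -/
noncomputable def thetaPow (k n : ℕ) : Polynomial (ZMod 4) :=
  ∑ i ∈ Finset.range k, X ^ (n * i)

/-- The bilinear map `∘`, as a polynomial in `Z₄[x]` (to be reduced modulo
`x^m - 1`, `m = lcm(α,β)`). -/
noncomputable def circ (α β : ℕ) (u v : Polynomial (ZMod 2))
    (u' v' : Polynomial (ZMod 4)) : Polynomial (ZMod 4) :=
  2 * lift24 u * thetaPow (Nat.lcm α β / α) α *
      X ^ (Nat.lcm α β - 1 - v.natDegree) * lift24 v.reverse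
    + u' * thetaPow (Nat.lcm α β / β) β *
      X ^ (Nat.lcm α β - 1 - v'.natDegree) * v'.reverse

/-!
With `u' = 0` or `v' = 0` the product `u ∘ v` is `2 B` with
`B = u θ_k(x^α) x^e v*`, `k = m/α`. Since `x^m - 1` is monic, `x^m - 1 ∣ 2 B` in `Z₄[x]`
gives `x^m - 1 ∣ B` modulo 2. Over `Z₂` we have `x^m - 1 = (x^α - 1) θ_k(x^α)`, so cancelling
`θ_k(x^α)` and the unit `x^e` modulo `x^α - 1` leaves `x^α - 1 ∣ u v*`.
-/

section Reduction

noncomputable abbrev mod2 : ZMod 4 →+* ZMod 2 :=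
  ZMod.castHom (by norm_num) (ZMod 2)

theorem mod2_eq_zero_of_two_mul_eq_zero {a : ZMod 4} (h : 2 * a = 0) : mod2 a = 0 := by
  revert a
  decide

theorem map_mod2_eq_zero_of_two_mul_eq_zero {q : (ZMod 4)[X]} (h : 2 * q = 0) :
    q.map mod2 = 0 := by
  ext n
  have hn : 2 * q.coeff n = 0 := by simpa using congrArg (coeff · n) h
  simpa using mod2_eq_zero_of_two_mul_eq_zero hn

theorem map_mod2_dvd_of_dvd_two_mul {P B : (ZMod 4)[X]} (hP : P.Monic) (h : P ∣ 2 * B) :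
    P.map mod2 ∣ B.map mod2 := by
  have hrem : 2 * (B %ₘ P) = 0 := by
    have h2 : (2 : (ZMod 4)[X]) * B = (2 : ZMod 4) • B := by
      rw [← C_mul', map_ofNat]
    rw [← (modByMonic_eq_zero_iff_dvd hP).mpr h, h2, smul_modByMonic, ← C_mul', map_ofNat]
  rw [← modByMonic_eq_zero_iff_dvd (hP.map mod2), ← map_modByMonic mod2 hP]
  exact map_mod2_eq_zero_of_two_mul_eq_zero hrem

theorem map_mod2_lift24 (p : (ZMod 2)[X]) : (lift24 p).map mod2 = p := by
  rw [lift24, Polynomial.map_sum]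
  conv_rhs => rw [p.as_sum_support]
  refine Finset.sum_congr rfl fun n _ => ?_
  simp [ZMod.natCast_val, C_mul_X_pow_eq_monomial]

theorem map_mod2_thetaPow (k n : ℕ) :
    (thetaPow k n).map mod2 = ∑ i ∈ Finset.range k, (X : (ZMod 2)[X]) ^ (n * i) := by
  simp [thetaPow, Polynomial.map_sum]

end Reduction

section Cyclic

variable {R : Type*} [CommRing R]

theorem isCoprime_X_pow_sub_one_X {n : ℕ} (hn : 0 < n) : IsCoprime (X ^ n - 1 : R[X]) X :=
  ⟨-1, X ^ (n - 1), by rw [← pow_succ, Nat.sub_add_cancel hn]; ring⟩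

theorem X_pow_sub_one_dvd_of_dvd_mul_X_pow {n e : ℕ} (hn : 0 < n) {p : R[X]}
    (h : X ^ n - 1 ∣ p * X ^ e) : X ^ n - 1 ∣ p :=
  (isCoprime_X_pow_sub_one_X hn).pow_right.dvd_of_dvd_mul_right h

theorem geom_sum_X_pow_mul_X_pow_sub_one (n k : ℕ) :
    (∑ i ∈ Finset.range k, (X : R[X]) ^ (n * i)) * (X ^ n - 1) = X ^ (n * k) - 1 := by
  simp_rw [pow_mul, geom_sum_mul]

theorem X_pow_sub_one_dvd_of_dvd_mul_geom_sum [IsDomain R] {n k : ℕ} (hnk : 0 < n * k)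
    {p : R[X]} (h : X ^ (n * k) - 1 ∣ p * ∑ i ∈ Finset.range k, (X : R[X]) ^ (n * i)) :
    X ^ n - 1 ∣ p := by
  rw [← geom_sum_X_pow_mul_X_pow_sub_one, mul_comm] at h
  refine (mul_dvd_mul_iff_right fun h0 => X_pow_sub_C_ne_zero hnk (1 : R) ?_).mp h
  rw [C_1, ← geom_sum_X_pow_mul_X_pow_sub_one, h0, zero_mul]

end Cyclic

theorem binary_part_orthogonality_general (α β : ℕ) (hα : 0 < α) (hβ : 0 < β)
    (u v : Polynomial (ZMod 2)) (u' v' : Polynomial (ZMod 4))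
    (hcirc : (X ^ Nat.lcm α β - 1 : Polynomial (ZMod 4)) ∣ circ α β u v u' v')
    (hzero : u' = 0 ∨ v' = 0) :
    (X ^ α - 1 : Polynomial (ZMod 2)) ∣ u * v.reverse := by
  set m := Nat.lcm α β
  set k := m / α
  set e := m - 1 - v.natDegree
  have hm : α * k = m := Nat.mul_div_cancel' (Nat.dvd_lcm_left α β)
  have hmpos : 0 < m := Nat.lcm_pos hα hβ
  have hcirc_eq : circ α β u v u' v' =
      2 * (lift24 u * thetaPow k α * X ^ e * lift24 v.reverse) := by
    rcases hzero with h | h <;> simp [circ, h, k, e, m, mul_assoc]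
  rw [hcirc_eq] at hcirc
  have hbin := map_mod2_dvd_of_dvd_two_mul (monic_X_pow_sub_C 1 hmpos.ne') hcirc
  simp only [Polynomial.map_mul, Polynomial.map_pow, Polynomial.map_sub, Polynomial.map_X,
    Polynomial.map_one, map_mod2_lift24, map_mod2_thetaPow, C_1] at hbin
  refine X_pow_sub_one_dvd_of_dvd_mul_X_pow hα (e := e)
    (X_pow_sub_one_dvd_of_dvd_mul_geom_sum (hm ▸ hmpos) (k := k) ?_)
  rw [hm]
  convert hbin using 1
  ring

/-- If `u(x)∘v(x) = 0` in `Z₄[x]/(x^m-1)` and `u'(x) = 0` or `v'(x) = 0`,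
then `u(x)v*(x) ≡ 0 (mod x^α - 1)` over `Z₂`. -/
theorem binary_part_orthogonality (α β : ℕ) (hα : 0 < α) (hβ : 0 < β)
    (u v : Polynomial (ZMod 2)) (u' v' : Polynomial (ZMod 4))
    (hu : u.degree < (α : ℕ)) (hv : v.degree < (α : ℕ))
    (hu' : u'.degree < (β : ℕ)) (hv' : v'.degree < (β : ℕ))
    (hcirc : (X ^ Nat.lcm α β - 1 : Polynomial (ZMod 4)) ∣ circ α β u v u' v')
    (hzero : u' = 0 ∨ v' = 0) :
    (X ^ α - 1 : Polynomial (ZMod 2)) ∣ u * v.reverse :=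
  binary_part_orthogonality_general α β hα hβ u v u' v' hcirc hzero
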